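/- Let T = (V, E) be an infinite, locally finite tree with a distinguished root vertex o, with vertex degrees bounded above by some constant Δ. If T is non-amenable, then there exists a constant M such that there is no path u₀, u₁, …, u_M in the subgraph of T induced on T_r in which every vertex u_j has degree exactly 2 in the induced subgraph on T_r (i.e., T satisfies condition (C2) with constant M). -/

import Mathlib

open SimpleGraph

variable {V : Type*}

/-- Reachability within a set `s`: there is a walk from `a` to `b` all of whose
vertices lie in `s` (i.e. reachability in the induced subgraph on `s`). -/
def ReachableWithin (G : SimpleGraph V) (s : Set V) : V → V → Prop :=
  Relation.ReflTransGen (fun x y => G.Adj x y ∧ x ∈ s ∧ y ∈ s)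

/-- The connected component of `u` in the subgraph of `G` induced on `s`. -/
def componentIn (G : SimpleGraph V) (s : Set V) (u : V) : Set V :=
  {w | w ∈ s ∧ ReachableWithin G s u w}

/-- The backbone of `G` relative to the vertex set `s`, rooted at `o`: vertices lying on
an infinite injective path starting at `o` all of whose vertices are in `s`. -/
def BackboneIn (G : SimpleGraph V) (s : Set V) (o : V) : Set V :=
  {v | ∃ f : ℕ → V, f 0 = o ∧ Function.Injective f ∧ (∀ n, f n ∈ s) ∧
    (∀ n, G.Adj (f n) (f (n + 1))) ∧ ∃ k, f k = v}

/-- The backbone `T_r` of `G` rooted at `o`: vertices lying on an infinite injective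
path starting at the root `o`. -/
def Backbone (G : SimpleGraph V) (o : V) : Set V :=
  BackboneIn G Set.univ o

/-- The edge boundary of a vertex set `S`: edges of `G` with exactly one endpoint in `S`. -/
def edgeBdry (G : SimpleGraph V) (S : Set V) : Set (Sym2 V) :=
  {e | ∃ a b : V, G.Adj a b ∧ e = s(a, b) ∧ a ∈ S ∧ b ∉ S}

/-- The degree of `u` in the subgraph of `G` induced on `s`. -/
noncomputable def degIn (G : SimpleGraph V) (s : Set V) (u : V) : ℕ :=
  (G.neighborSet u ∩ s).ncard

/-- Condition (C1) with constant `M`: for every vertex `v`, every connected component of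
the subgraph induced on `(V \ T_r) ∪ {v}` has at most `M` vertices. -/
def CondC1 (G : SimpleGraph V) (o : V) (M : ℕ) : Prop :=
  ∀ v u : V, u ∈ (Backbone G o)ᶜ ∪ {v} →
    (componentIn G ((Backbone G o)ᶜ ∪ {v}) u).ncard ≤ M

/-- Condition (C2) with constant `M`: there is no path `u 0, u 1, …, u M` in the subgraph
induced on the backbone `T_r` all of whose vertices have degree `2` in that subgraph. -/
def CondC2 (G : SimpleGraph V) (o : V) (M : ℕ) : Prop :=
  ¬ ∃ u : ℕ → V, (∀ j, j ≤ M → u j ∈ Backbone G o) ∧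
    (∀ j, j < M → G.Adj (u j) (u (j + 1))) ∧
    (∀ j k, j ≤ M → k ≤ M → u j = u k → j = k) ∧
    (∀ j, j ≤ M → degIn G (Backbone G o) (u j) = 2)

/-- Non-amenability: the edge boundary of every finite nonempty vertex set is at least a
fixed positive proportion of its size. -/
def NonAmenable (G : SimpleGraph V) : Prop :=
  ∃ c : ℝ, 0 < c ∧ ∀ S : Set V, S.Finite → S.Nonempty →
    c * (S.ncard : ℝ) ≤ ((edgeBdry G S).ncard : ℝ)

/-- `K` is connected in `G`: any two vertices of `K` are joined by a walk inside `K`. -/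
def ConnectedIn (G : SimpleGraph V) (K : Set V) : Prop :=
  ∀ a ∈ K, ∀ b ∈ K, ReachableWithin G K a b

/-- `|K|_D`: the sum over the vertices of the finite set `K` of their degrees in `G`. -/
noncomputable def degSumF (G : SimpleGraph V) (K : Finset V) : ℕ :=
  ∑ v ∈ K, (G.neighborSet v).ncard

/-- The edge-expansion constant `Φ_E(G)`. -/
noncomputable def expConst (G : SimpleGraph V) : ℝ :=
  sInf {x : ℝ | ∃ K : Finset V, K.Nonempty ∧ ConnectedIn G ↑K ∧
    x = ((edgeBdry G ↑K).ncard : ℝ) / (degSumF G K : ℝ)}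

/-!
Suppose the backbone contains a path `u 0, …, u (n + 1)` whose vertices all have backbone
degree `2`. Let `S` be the union of the bushes of `u 1, …, u n`: these vertices together with
the trees hanging off them outside the backbone. Each bush is finite by König's lemma, since a
ray inside it would extend a ray from `o` and so lie on the backbone. As `T` is a tree, the
only edges leaving `S` are the end edges `u 0 u 1` and `u n u (n + 1)`, so `|∂S| ≤ 2` while
`|S| ≥ n`, which contradicts `c |S| ≤ |∂S|` once `n > 2 / c`.
-/

section Reachability

variable {G : SimpleGraph V} {s : Set V}

lemma ReachableWithin.symm {a b : V} (h : ReachableWithin G s a b) :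
    ReachableWithin G s b a := by
  induction h with
  | refl => exact .refl
  | tail _ hbc ih => exact .head ⟨hbc.1.symm, hbc.2.2, hbc.2.1⟩ ih

lemma ReachableWithin.reachable_deleteEdges {e : Sym2 V} {x y : V}
    (h : ReachableWithin G s x y) (he : ∃ z ∈ e, z ∉ s) :
    (G.deleteEdges {e}).Reachable x y := by
  obtain ⟨z, hze, hzs⟩ := he
  rw [reachable_iff_reflTransGen]
  refine Relation.ReflTransGen.mono (fun p q hpq => ?_) x y h
  refine deleteEdges_adj.mpr ⟨hpq.1, fun hpqe => hzs ?_⟩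
  rcases Sym2.mem_iff.mp (Set.mem_singleton_iff.mp hpqe ▸ hze) with rfl | rfl
  exacts [hpq.2.1, hpq.2.2]

lemma mem_componentIn_self {u : V} (hu : u ∈ s) : u ∈ componentIn G s u :=
  ⟨hu, .refl⟩

lemma mem_componentIn_of_adj {u a b : V} (ha : a ∈ componentIn G s u) (hab : G.Adj a b)
    (hb : b ∈ s) : b ∈ componentIn G s u :=
  ⟨hb, ha.2.tail ⟨hab, ha.1, hb⟩⟩

lemma ReachableWithin.eq_or_mem_componentIn_diff {x z : V} (h : ReachableWithin G s x z) :
    z = x ∨ ∃ y, G.Adj x y ∧ y ∈ s ∧ z ∈ componentIn G (s \ {x}) y := by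
  induction h with
  | refl => exact .inl rfl
  | @tail b c _ hbc ih =>
    by_cases hcx : c = x
    · exact .inl hcx
    have hc : c ∈ s \ {x} := ⟨hbc.2.2, hcx⟩
    rcases ih with rfl | ⟨y, hxy, hys, hby⟩
    · exact .inr ⟨c, hbc.1, hbc.2.2, mem_componentIn_self hc⟩
    · exact .inr ⟨y, hxy, hys, mem_componentIn_of_adj hby hbc.1 hc⟩

end Reachability

def IsRay (G : SimpleGraph V) (r : ℕ → V) : Prop :=
  Function.Injective r ∧ ∀ n, G.Adj (r n) (r (n + 1))

section Konig

variable {G : SimpleGraph V}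

lemma exists_adj_infinite_componentIn_diff (hlf : ∀ v, (G.neighborSet v).Finite) {s : Set V}
    {x : V} (hx : (componentIn G s x).Infinite) :
    ∃ y, G.Adj x y ∧ y ∈ s \ {x} ∧ (componentIn G (s \ {x}) y).Infinite := by
  have hcover : componentIn G s x ⊆
      {x} ∪ ⋃ y ∈ G.neighborSet x ∩ s, componentIn G (s \ {x}) y := by
    intro z hz
    rcases hz.2.eq_or_mem_componentIn_diff with rfl | ⟨y, hxy, hys, hzy⟩
    · exact .inl rfl
    · exact .inr (Set.mem_biUnion ⟨hxy, hys⟩ hzy)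
  by_contra! hfin
  refine hx (((Set.finite_singleton x).union ((hlf x).inter_of_left s |>.biUnion ?_)).subset
    hcover)
  rintro y ⟨hxy, hys⟩
  exact hfin y hxy ⟨hys, hxy.ne'⟩

lemma exists_isRay_of_infinite_componentIn (hlf : ∀ v, (G.neighborSet v).Finite) {s : Set V}
    {w : V} (hw : w ∈ s) (hs : (componentIn G s w).Infinite) :
    ∃ r, IsRay G r ∧ r 0 = w ∧ ∀ n, r n ∈ s := by
  let X := {p : V × Set V // p.1 ∈ p.2 ∧ (componentIn G p.2 p.1).Infinite}
  choose next hadj hmem hinf using fun p : X => exists_adj_infinite_componentIn_diff hlf p.2.2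
  let seq : ℕ → X := fun n => Nat.rec ⟨(w, s), hw, hs⟩
    (fun _ p => ⟨(next p, p.1.2 \ {p.1.1}), hmem p, hinf p⟩) n
  let t : ℕ → Set V := fun n => (seq n).1.2
  have ht : Antitone t := antitone_nat_of_succ_le fun n => Set.sdiff_subset
  refine ⟨fun n => (seq n).1.1, ⟨Function.Injective.of_lt_imp_ne fun n m hnm => ?_,
    fun n => hadj (seq n)⟩, rfl, fun n => ht (Nat.zero_le n) (seq n).2.1⟩
  exact fun h => (ht (Nat.succ_le_of_lt hnm) (seq m).2.1).2 h.symm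

end Konig

section Backbone

variable {G : SimpleGraph V} {o : V}

lemma mem_backbone_of_isRay {r : ℕ → V} (hr : IsRay G r) (h0 : r 0 = o) (n : ℕ) :
    r n ∈ Backbone G o :=
  ⟨r, h0, hr.1, fun _ => trivial, hr.2, n, rfl⟩

lemma reachableWithin_backbone {b : V} (hb : b ∈ Backbone G o) :
    ReachableWithin G (Backbone G o) o b := by
  obtain ⟨f, hf0, hfinj, -, hfadj, k, rfl⟩ := hb
  have hf : ∀ n, f n ∈ Backbone G o := mem_backbone_of_isRay ⟨hfinj, hfadj⟩ hf0
  induction k with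
  | zero => rw [hf0]; exact .refl
  | succ k ih => exact ih.tail ⟨hfadj k, hf k, hf (k + 1)⟩

lemma exists_succ_mem_backbone_of_isRay {v : V} (hv : v ∈ Backbone G o) {r : ℕ → V}
    (hr : IsRay G r) (h0 : r 0 = v) : ∃ n, r (n + 1) ∈ Backbone G o := by
  by_contra! hout
  obtain ⟨f, hf0, hfinj, -, hfadj, k, rfl⟩ := hv
  have hf : ∀ n, f n ∈ Backbone G o := mem_backbone_of_isRay ⟨hfinj, hfadj⟩ hf0
  have hr' : ∀ n, k < n → r (n - k) ∉ Backbone G o := fun n hn => by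
    obtain ⟨m, hm⟩ : ∃ m, n - k = m + 1 := ⟨n - k - 1, by omega⟩
    exact hm ▸ hout m
  -- a ray from `o` to `v` followed by `r` is a ray from `o` through `r 1`
  let g : ℕ → V := fun n => if n ≤ k then f n else r (n - k)
  have hg : IsRay G g := by
    refine ⟨fun a b hab => ?_, fun n => ?_⟩
    · simp only [g] at hab
      split_ifs at hab with ha hb hb
      · exact hfinj hab
      · exact absurd (hab ▸ hf a) (hr' b (by omega))
      · exact absurd (hab ▸ hf b) (hr' a (by omega))
      · have := hr.1 hab
        omega
    · simp only [g]
      rcases lt_trichotomy n k with hn | rfl | hn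
      · simpa [hn.le, Nat.succ_le_of_lt hn] using hfadj n
      · simpa [← h0] using hr.2 0
      · simpa [show ¬n ≤ k by omega, show ¬n < k by omega,
          show n + 1 - k = n - k + 1 by omega] using hr.2 (n - k)
  exact hout 0 (by simpa [g] using mem_backbone_of_isRay hg (by simp [g, hf0]) (k + 1))

/-- `v` together with everything hanging off it outside the backbone: the components of
condition (C1). -/
def bush (G : SimpleGraph V) (o v : V) : Set V :=
  componentIn G ((Backbone G o)ᶜ ∪ {v}) v

lemma bush_finite (hlf : ∀ v, (G.neighborSet v).Finite) {v : V} (hv : v ∈ Backbone G o) :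
    (bush G o v).Finite := by
  by_contra hinf
  obtain ⟨r, hr, h0, hrs⟩ := exists_isRay_of_infinite_componentIn hlf (.inr rfl) hinf
  obtain ⟨n, hn⟩ := exists_succ_mem_backbone_of_isRay hv hr h0
  rcases hrs (n + 1) with hout | hrv
  · exact hout hn
  · exact n.succ_ne_zero (hr.1 (hrv.trans h0.symm))

/-- Any other edge leaving the bush would close a cycle through `v` and `o`. -/
lemma eq_and_mem_backbone_of_adj_of_mem_bush (hG : G.IsAcyclic) {v a b : V}
    (hv : v ∈ Backbone G o) (ha : a ∈ bush G o v) (hb : b ∉ bush G o v) (hab : G.Adj a b) :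
    a = v ∧ b ∈ Backbone G o := by
  have hbB : b ∈ Backbone G o := by
    by_contra h
    exact hb (mem_componentIn_of_adj ha hab (.inl h))
  refine ⟨by_contra fun hav => isBridge_iff.mp (isAcyclic_iff_forall_adj_isBridge.mp hG hab) ?_,
    hbB⟩
  have haB : a ∉ Backbone G o := ha.1.resolve_right hav
  have hbv : b ∉ (Backbone G o)ᶜ ∪ {v} := by
    rintro (h | rfl)
    exacts [h hbB, hb (mem_componentIn_self (.inr rfl))]
  have hav' : ReachableWithin G ((Backbone G o)ᶜ ∪ {v}) a v := ha.2.symm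
  have hvb : ReachableWithin G (Backbone G o) v b :=
    (reachableWithin_backbone hv).symm.trans (reachableWithin_backbone hbB)
  exact (hav'.reachable_deleteEdges ⟨b, Sym2.mem_mk_right a b, hbv⟩).trans
    (hvb.reachable_deleteEdges ⟨a, Sym2.mem_mk_left a b, haB⟩)

end Backbone

lemma neighborSet_inter_eq_pair_of_degIn_eq_two {G : SimpleGraph V} {s : Set V} {x y z : V}
    (hfin : (G.neighborSet x).Finite) (hx : degIn G s x = 2) (hy : y ∈ G.neighborSet x ∩ s)
    (hz : z ∈ G.neighborSet x ∩ s) (hyz : y ≠ z) : G.neighborSet x ∩ s = {y, z} :=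
  (Set.eq_of_subset_of_ncard_le (Set.insert_subset hy (Set.singleton_subset_iff.mpr hz))
    (by rw [← degIn, hx, Set.ncard_pair hyz]) (hfin.inter_of_left s)).symm

section DegreeTwoPath

variable {G : SimpleGraph V} {o : V} {u : ℕ → V} {n : ℕ}

lemma edgeBdry_iUnion_bush_subset (hG : G.IsAcyclic) (hlf : ∀ v, (G.neighborSet v).Finite)
    (hmem : ∀ j, j ≤ n + 1 → u j ∈ Backbone G o)
    (hadj : ∀ j, j < n + 1 → G.Adj (u j) (u (j + 1)))
    (hinj : ∀ j k, j ≤ n + 1 → k ≤ n + 1 → u j = u k → j = k)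
    (hdeg : ∀ j, j ≤ n + 1 → degIn G (Backbone G o) (u j) = 2) :
    edgeBdry G (⋃ j < n, bush G o (u (j + 1))) ⊆ {s(u 0, u 1), s(u n, u (n + 1))} := by
  rintro e ⟨a, b, hab, rfl, haS, hbS⟩
  have hS : ∀ i < n, u (i + 1) ≠ b := fun i hi hb =>
    hbS (Set.mem_iUnion₂.mpr ⟨i, hi, hb ▸ mem_componentIn_self (.inr rfl)⟩)
  obtain ⟨j, hj, ha⟩ := Set.mem_iUnion₂.mp haS
  obtain ⟨rfl, hbB⟩ := eq_and_mem_backbone_of_adj_of_mem_bush hG (hmem _ (by omega)) ha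
    (fun hb => hbS (Set.mem_iUnion₂.mpr ⟨j, hj, hb⟩)) hab
  have hnbr : G.neighborSet (u (j + 1)) ∩ Backbone G o = {u j, u (j + 2)} :=
    neighborSet_inter_eq_pair_of_degIn_eq_two (hlf _) (hdeg _ (by omega))
      ⟨(hadj j (by omega)).symm, hmem j (by omega)⟩
      ⟨hadj (j + 1) (by omega), hmem _ (by omega)⟩
      (fun h => by have := hinj _ _ (by omega) (by omega) h; omega)
  rcases (hnbr ▸ ⟨hab, hbB⟩ : b ∈ ({u j, u (j + 2)} : Set V)) with rfl | rfl
  · cases j with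
    | zero => exact .inl Sym2.eq_swap
    | succ i => exact absurd rfl (hS i (by omega))
  · obtain rfl : j + 1 = n := by
      by_contra h
      exact hS (j + 1) (by omega) rfl
    exact .inr rfl

lemma exists_finite_le_ncard_edgeBdry_le_two (hG : G.IsAcyclic)
    (hlf : ∀ v, (G.neighborSet v).Finite)
    (hmem : ∀ j, j ≤ n + 1 → u j ∈ Backbone G o)
    (hadj : ∀ j, j < n + 1 → G.Adj (u j) (u (j + 1)))
    (hinj : ∀ j k, j ≤ n + 1 → k ≤ n + 1 → u j = u k → j = k)
    (hdeg : ∀ j, j ≤ n + 1 → degIn G (Backbone G o) (u j) = 2) :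
    ∃ S : Set V, S.Finite ∧ n ≤ S.ncard ∧ (edgeBdry G S).ncard ≤ 2 := by
  set S := ⋃ j < n, bush G o (u (j + 1))
  have hSfin : S.Finite :=
    (Set.finite_Iio n).biUnion fun j hj => bush_finite hlf (hmem _ (Nat.succ_le_succ hj.le))
  have hinterior : (fun j => u (j + 1)) '' Set.Iio n ⊆ S := by
    rintro _ ⟨j, hj, rfl⟩
    exact Set.mem_iUnion₂.mpr ⟨j, hj, mem_componentIn_self (.inr rfl)⟩
  have hinjOn : Set.InjOn (fun j => u (j + 1)) (Set.Iio n) := fun i hi j hj h => by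
    have := hinj _ _ (Nat.succ_le_of_lt (Nat.lt_succ_of_lt hi))
      (Nat.succ_le_of_lt (Nat.lt_succ_of_lt hj)) h
    omega
  refine ⟨S, hSfin, ?_, ?_⟩
  · calc n = ((fun j => u (j + 1)) '' Set.Iio n).ncard := by
          rw [hinjOn.ncard_image, ← Finset.coe_range, Set.ncard_coe_finset, Finset.card_range]
      _ ≤ S.ncard := Set.ncard_le_ncard hinterior hSfin
  · calc (edgeBdry G S).ncard ≤ ({s(u 0, u 1), s(u n, u (n + 1))} : Set (Sym2 V)).ncard :=
          Set.ncard_le_ncard (edgeBdry_iUnion_bush_subset hG hlf hmem hadj hinj hdeg)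
            (Set.toFinite _)
      _ ≤ 2 := (Set.ncard_insert_le _ _).trans (by rw [Set.ncard_singleton])

end DegreeTwoPath

theorem statement2_general {V : Type*} (G : SimpleGraph V) (o : V) (Δ : ℕ)
    (hT : G.IsTree)
    (hdeg : ∀ v : V, (G.neighborSet v).Finite ∧ (G.neighborSet v).ncard ≤ Δ)
    (hNA : NonAmenable G) :
    ∃ M : ℕ, CondC2 G o M := by
  obtain ⟨c, hc, hNA⟩ := hNA
  refine ⟨⌈2 / c⌉₊ + 2, fun ⟨u, hmem, hadj, hinj, hdeg2⟩ => ?_⟩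
  obtain ⟨S, hSfin, hcard, hbdry⟩ :=
    exists_finite_le_ncard_edgeBdry_le_two (n := ⌈2 / c⌉₊ + 1) hT.isAcyclic
      (fun v => (hdeg v).1) hmem hadj hinj hdeg2
  have hlarge : 2 < c * S.ncard := by
    have : 2 / c < S.ncard :=
      (Nat.le_ceil _).trans_lt (by exact_mod_cast Nat.lt_of_succ_le hcard)
    rwa [div_lt_iff₀ hc, mul_comm] at this
  have hsmall : ((edgeBdry G S).ncard : ℝ) ≤ 2 := by exact_mod_cast hbdry
  linarith [hNA S hSfin (Set.nonempty_of_ncard_ne_zero (by omega))]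

/-- A non-amenable bounded-degree infinite tree satisfies condition (C2)
for some constant `M`. -/
theorem statement2 {V : Type*} (G : SimpleGraph V) (o : V) (Δ : ℕ)
    (hT : G.IsTree) (hinf : Infinite V)
    (hdeg : ∀ v : V, (G.neighborSet v).Finite ∧ (G.neighborSet v).ncard ≤ Δ)
    (hNA : NonAmenable G) :
    ∃ M : ℕ, CondC2 G o M :=
  statement2_general G o Δ hT hdeg hNA
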